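/- The interior of the feasible region Θ (as a subset of ℝ^U) equals {θ ∈ ℝ^U : D²ψ(x|θ) is positive definite for all x ∈ [0,1]^m}. -/

import Mathlib

/-!
The Hessian `H(θ, x) = D²ψ(x|θ) = I - Σ_u (θ_u/π²) D²(Π_j cos(π u_j x_j))(x)` is affine in
`θ`, continuous in `(θ, x)`, and `H(0, x) = I`. If `θ` is interior to `Θ`, then `sθ ∈ Θ` for
some `s > 1`, and `0 ≤ vᵀ H(sθ, x) v = (1 - s)|v|² + s vᵀ H(θ, x) v` forces `vᵀ H(θ, x) v > 0`.
Conversely, if every `H(θ, x)` is positive definite, then `vᵀ H(θ, x) v` is positive on the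
compact set `[0,1]^m × {‖v‖ = 1}`, hence stays positive for all `θ'` near `θ`.
-/

open Real

/-- The potential function ψ(x|θ) of the structural gradient model. -/
noncomputable def sgmPotential (m : ℕ) (U : Finset (Fin m → ℕ)) (θ : U → ℝ)
    (x : Fin m → ℝ) : ℝ :=
  (1 / 2) * ∑ j, x j ^ 2 -
    ∑ u : U, (θ u / Real.pi ^ 2) * ∏ j, Real.cos (Real.pi * ((u : Fin m → ℕ) j : ℝ) * x j)

/-- The Hessian matrix D²f(x). -/
noncomputable def hessian (m : ℕ) (f : (Fin m → ℝ) → ℝ) (x : Fin m → ℝ) :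
    Matrix (Fin m) (Fin m) ℝ :=
  Matrix.of fun i j => fderiv ℝ (fun y => fderiv ℝ f y (Pi.single j 1)) x (Pi.single i 1)

open Filter Topology Matrix

section PosDef

variable {P X n : Type*} [Fintype n]

theorem Matrix.posDef_of_forall_mem_sphere {A : Matrix n n ℝ} (hA : A.IsHermitian)
    (h : ∀ v ∈ Metric.sphere (0 : n → ℝ) 1, 0 < v ⬝ᵥ A *ᵥ v) : A.PosDef := by
  refine .of_dotProduct_mulVec_pos hA fun v hv => ?_
  have hv' : 0 < ‖v‖ := norm_pos_iff.2 hv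
  have hw := h (‖v‖⁻¹ • v) (by simp [norm_smul, hv'.ne'])
  simp only [mulVec_smul, dotProduct_smul, smul_dotProduct, smul_eq_mul] at hw
  rw [star_trivial]
  exact pos_of_mul_pos_right (pos_of_mul_pos_right hw (by positivity)) (by positivity)

theorem isOpen_setOf_forall_posDef [TopologicalSpace P] [TopologicalSpace X]
    {H : P → X → Matrix n n ℝ} {K : Set X} (hK : IsCompact K)
    (hH : Continuous (Function.uncurry H)) (hHerm : ∀ θ x, (H θ x).IsHermitian) :
    IsOpen {θ | ∀ x ∈ K, (H θ x).PosDef} := by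
  have hq : Continuous fun p : P × X × (n → ℝ) => p.2.2 ⬝ᵥ H p.1 p.2.1 *ᵥ p.2.2 :=
    continuous_snd.snd.dotProduct
      ((hH.comp (continuous_fst.prodMk continuous_snd.fst)).matrix_mulVec continuous_snd.snd)
  refine isOpen_iff_eventually.2 fun θ hθ => ?_
  have hpos : ∀ᶠ θ' in 𝓝 θ, ∀ xv ∈ K ×ˢ Metric.sphere (0 : n → ℝ) 1,
      0 < xv.2 ⬝ᵥ H θ' xv.1 *ᵥ xv.2 :=
    (hK.prod (isCompact_sphere 0 1)).eventually_forall_of_forall_eventually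
      fun ⟨x, v⟩ ⟨hx, hv⟩ => (isOpen_lt continuous_const hq).mem_nhds <| by
        simpa using
          (hθ x hx).dotProduct_mulVec_pos (ne_zero_of_mem_sphere one_ne_zero ⟨v, hv⟩)
  filter_upwards [hpos] with θ' hθ' x hx
  exact posDef_of_forall_mem_sphere (hHerm θ' x) fun v hv => hθ' (x, v) ⟨hx, hv⟩

theorem forall_posDef_of_mem_interior [DecidableEq n] [AddCommGroup P] [Module ℝ P]
    [TopologicalSpace P] [ContinuousSMul ℝ P] {H : P → X → Matrix n n ℝ} {K : Set X}
    (hH : ∀ (s : ℝ) θ x, H (s • θ) x = (1 - s) • 1 + s • H θ x) {θ : P}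
    (hθ : θ ∈ interior {θ | ∀ x ∈ K, (H θ x).PosSemidef}) : ∀ x ∈ K, (H θ x).PosDef := by
  have hlim : Tendsto (fun s : ℝ => s • θ) (𝓝[>] 1) (𝓝 θ) := by
    simpa using
      (tendsto_nhdsWithin_of_tendsto_nhds (tendsto_id (x := 𝓝 (1 : ℝ)))).smul_const θ
  obtain ⟨s, hs, hs1⟩ :=
    ((hlim.eventually (mem_interior_iff_mem_nhds.1 hθ)).and self_mem_nhdsWithin).exists
  intro x hx
  refine .of_dotProduct_mulVec_pos (interior_subset hθ x hx).isHermitian fun v hv => ?_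
  have hvv : 0 < v ⬝ᵥ v := by simpa using dotProduct_self_star_pos_iff.2 hv
  have hsv := (hs x hx).dotProduct_mulVec_nonneg v
  simp only [hH, star_trivial, add_mulVec, smul_mulVec, one_mulVec, dotProduct_add,
    dotProduct_smul, smul_eq_mul] at hsv ⊢
  nlinarith [mul_pos (sub_pos.2 (Set.mem_Ioi.1 hs1)) hvv]

end PosDef

section Hessian

variable {m : ℕ} {f g : (Fin m → ℝ) → ℝ}

theorem hessian_apply (hf : ContDiff ℝ 2 f) (x : Fin m → ℝ) (i j : Fin m) :
    hessian m f x i j = fderiv ℝ (fderiv ℝ f) x (Pi.single i 1) (Pi.single j 1) := by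
  rw [hessian, of_apply, fderiv_clm_apply _ (differentiableAt_const _)]
  · simp
  · exact (hf.fderiv_right (m := 1) (by norm_num)).differentiable one_ne_zero x

theorem hessian_isHermitian (hf : ContDiff ℝ 2 f) (x : Fin m → ℝ) :
    (hessian m f x).IsHermitian :=
  IsHermitian.ext fun i j => by
    rw [star_trivial, hessian_apply hf, hessian_apply hf,
      (hf.contDiffAt.isSymmSndFDerivAt (by simp)).eq]

theorem continuous_hessian (hf : ContDiff ℝ 2 f) : Continuous (hessian m f) := by
  have h2 : Continuous (fderiv ℝ (fderiv ℝ f)) :=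
    (hf.fderiv_right (m := 1) (by norm_num)).continuous_fderiv one_ne_zero
  refine continuous_pi fun i => continuous_pi fun j => ?_
  simp only [hessian_apply hf]
  fun_prop

theorem hessian_add (hf : ContDiff ℝ 2 f) (hg : ContDiff ℝ 2 g) (x : Fin m → ℝ) :
    hessian m (fun z => f z + g z) x = hessian m f x + hessian m g x := by
  have hf1 : ContDiff ℝ 1 (fderiv ℝ f) := hf.fderiv_right (by norm_num)
  have hg1 : ContDiff ℝ 1 (fderiv ℝ g) := hg.fderiv_right (by norm_num)
  have h : fderiv ℝ (fun z => f z + g z) = fun y => fderiv ℝ f y + fderiv ℝ g y :=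
    funext fun y => fderiv_fun_add (hf.differentiable (by norm_num) y)
      (hg.differentiable (by norm_num) y)
  ext i j
  rw [hessian_apply (hf.add hg), h, fderiv_fun_add (hf1.differentiable one_ne_zero x)
    (hg1.differentiable one_ne_zero x)]
  simp [hessian_apply hf, hessian_apply hg]

theorem hessian_sum {ι : Type*} (s : Finset ι) (c : ι → ℝ) {f : ι → (Fin m → ℝ) → ℝ}
    (hf : ∀ k, ContDiff ℝ 2 (f k)) (x : Fin m → ℝ) :
    hessian m (fun z => ∑ k ∈ s, c k * f k z) x = ∑ k ∈ s, c k • hessian m (f k) x := by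
  have hf1 (k : ι) : ContDiff ℝ 1 (fderiv ℝ (f k)) := (hf k).fderiv_right (by norm_num)
  have h : fderiv ℝ (fun z => ∑ k ∈ s, c k * f k z) =
      fun y => ∑ k ∈ s, c k • fderiv ℝ (f k) y :=
    funext fun y => by
      rw [fderiv_fun_sum fun k _ => ((hf k).differentiable (by norm_num) y).const_mul (c k)]
      simp only [fderiv_const_mul ((hf _).differentiable (by norm_num) y)]
  ext i j
  rw [hessian_apply (ContDiff.sum fun k _ => contDiff_const.mul (hf k)), h,
    fderiv_fun_sum (A := fun k y => c k • fderiv ℝ (f k) y)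
      fun k _ => ((hf1 k).differentiable one_ne_zero x).const_smul (c k)]
  simp [fderiv_fun_const_smul ((hf1 _).differentiable one_ne_zero x), hessian_apply (hf _),
    Matrix.sum_apply]

theorem fderiv_half_sum_sq_apply (y v : Fin m → ℝ) :
    fderiv ℝ (fun x : Fin m → ℝ => (1 / 2) * ∑ k, x k ^ 2) y v = y ⬝ᵥ v := by
  simp (disch := fun_prop) [fderiv_const_mul, fderiv_fun_sum, fderiv_fun_pow,
    (hasFDerivAt_apply _ _).fderiv, Finset.mul_sum, dotProduct]
  exact Finset.sum_congr rfl fun k _ => by ring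

theorem hessian_half_sum_sq (x : Fin m → ℝ) :
    hessian m (fun x : Fin m → ℝ => (1 / 2) * ∑ k, x k ^ 2) x = 1 := by
  ext i j
  simp only [hessian, of_apply, fderiv_half_sum_sq_apply, dotProduct_single, mul_one,
    (hasFDerivAt_apply _ _).fderiv, ContinuousLinearMap.proj_apply, Pi.single_apply,
    one_apply, eq_comm]

end Hessian

section Potential

variable {m : ℕ} {U : Finset (Fin m → ℕ)}

noncomputable def cosProduct (u : Fin m → ℕ) (x : Fin m → ℝ) : ℝ :=
  ∏ j, cos (π * u j * x j)

theorem contDiff_cosProduct (u : Fin m → ℕ) {n : WithTop ℕ∞} :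
    ContDiff ℝ n (cosProduct u) := by
  unfold cosProduct
  fun_prop

theorem contDiff_sgmPotential (θ : U → ℝ) {n : WithTop ℕ∞} :
    ContDiff ℝ n (sgmPotential m U θ) := by
  unfold sgmPotential
  fun_prop

theorem hessian_sgmPotential (θ : U → ℝ) (x : Fin m → ℝ) :
    hessian m (sgmPotential m U θ) x =
      1 + ∑ u : U, (-(θ u / π ^ 2)) • hessian m (cosProduct u.1) x := by
  have hψ : sgmPotential m U θ =
      fun x => (1 / 2) * ∑ k, x k ^ 2 + ∑ u : U, (-(θ u / π ^ 2)) * cosProduct u.1 x := by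
    funext x
    simp [sgmPotential, cosProduct, sub_eq_add_neg]
  have hG (u : U) : ContDiff ℝ 2 (cosProduct u.1) := contDiff_cosProduct u.1
  have hsum : ContDiff ℝ 2 fun z => ∑ u : U, (-(θ u / π ^ 2)) * cosProduct u.1 z :=
    ContDiff.sum fun u _ => contDiff_const.mul (hG u)
  rw [hψ, hessian_add (by fun_prop) hsum, hessian_half_sum_sq, hessian_sum _ _ hG]

theorem hessian_sgmPotential_smul (s : ℝ) (θ : U → ℝ) (x : Fin m → ℝ) :
    hessian m (sgmPotential m U (s • θ)) x =
      (1 - s) • 1 + s • hessian m (sgmPotential m U θ) x := by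
  have hsum : ∑ u : U, (-((s • θ) u / π ^ 2)) • hessian m (cosProduct u.1) x =
      s • ∑ u : U, (-(θ u / π ^ 2)) • hessian m (cosProduct u.1) x := by
    rw [Finset.smul_sum]
    exact Finset.sum_congr rfl fun u _ => by
      rw [smul_smul, Pi.smul_apply, smul_eq_mul, mul_neg, mul_div_assoc]
  rw [hessian_sgmPotential, hessian_sgmPotential, hsum]
  module

theorem continuous_hessian_sgmPotential :
    Continuous fun p : (U → ℝ) × (Fin m → ℝ) => hessian m (sgmPotential m U p.1) p.2 := by
  have hG (u : Fin m → ℕ) := continuous_hessian (m := m) (contDiff_cosProduct u)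
  simp only [hessian_sgmPotential]
  fun_prop

end Potential

theorem sgm_interior_of_feasible_region_general (m : ℕ)
    (U : Finset (Fin m → ℕ)) :
    interior {θ : U → ℝ | ∀ x ∈ Set.Icc (0 : Fin m → ℝ) 1,
        (hessian m (sgmPotential m U θ) x).PosSemidef}
      = {θ : U → ℝ | ∀ x ∈ Set.Icc (0 : Fin m → ℝ) 1,
          (hessian m (sgmPotential m U θ) x).PosDef} :=
  subset_antisymm (fun _ hθ => forall_posDef_of_mem_interior hessian_sgmPotential_smul hθ)
    (interior_maximal (fun _ hθ x hx => (hθ x hx).posSemidef)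
      (isOpen_setOf_forall_posDef isCompact_Icc continuous_hessian_sgmPotential
        fun θ => hessian_isHermitian (contDiff_sgmPotential θ)))

/-- The interior of the feasible region Θ is the set of θ for which the Hessian
D²ψ(x|θ) is positive definite for all x ∈ [0,1]^m. -/
theorem sgm_interior_of_feasible_region (m : ℕ) (hm : 0 < m)
    (U : Finset (Fin m → ℕ)) :
    interior {θ : U → ℝ | ∀ x ∈ Set.Icc (0 : Fin m → ℝ) 1,
        (hessian m (sgmPotential m U θ) x).PosSemidef}
      = {θ : U → ℝ | ∀ x ∈ Set.Icc (0 : Fin m → ℝ) 1,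
          (hessian m (sgmPotential m U θ) x).PosDef} :=
  sgm_interior_of_feasible_region_general m U
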